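/- arXiv:2106.07950 — 3 statements merged into one kernel-verified Lean document; each statement's English description precedes it below -/
import Mathlib

section
/- Let β₁ ≠ β₂ be real numbers and for a direction vector v = (1,β) and b > 0 define Λ^v(b) = {(m,n) ∈ ℤ² : βm − b/2 ≤ n ≤ βm + b/2}. Then for every b > 4(⌊|β₁ − β₂|⌋ + 1), every element of ℤ² can be written as the sum of an element of Λ^{(1,β₁)}(b) and an element of Λ^{(1,β₂)}(b). -/
/-!
Write `δ = β₁ - β₂`. For `p = (m, n)`, first pick `m₁ ∈ ℤ` with `δ m₁` within `|δ|/2` of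
`n - β₂ m` (possible as `δ ≠ 0`), then put `n₁ = round (β₁ m₁)`, so `q = (m₁, n₁)` lies within
`1/2` of the line of slope `β₁`. The remainder `r = p - q` satisfies
`r.2 - β₂ r.1 = (n - β₂ m - δ m₁) + (β₁ m₁ - n₁)`, of size at most `(|δ| + 1)/2`, and
`b > 4 (⌊|δ|⌋ + 1)` is far more than the needed `|δ| + 1 ≤ b`.
-/

/-- The directional strip `Λ^{(1,β)}(b) = {(m,n) ∈ ℤ² : βm − b/2 ≤ n ≤ βm + b/2}`. -/
def dirLambda (β b : ℝ) : Set (ℤ × ℤ) :=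
  {p : ℤ × ℤ | β * (p.1 : ℝ) - b / 2 ≤ (p.2 : ℝ) ∧ (p.2 : ℝ) ≤ β * (p.1 : ℝ) + b / 2}

theorem mem_dirLambda_iff_abs_sub_le {β b : ℝ} {p : ℤ × ℤ} :
    p ∈ dirLambda β b ↔ |(p.2 : ℝ) - β * p.1| ≤ b / 2 := by
  rw [abs_sub_le_iff, dirLambda, Set.mem_ofPred_eq]
  constructor <;> rintro ⟨h₁, h₂⟩ <;> constructor <;> linarith

theorem exists_int_abs_mul_sub_le {δ : ℝ} (hδ : δ ≠ 0) (t : ℝ) :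
    ∃ k : ℤ, |δ * k - t| ≤ |δ| / 2 := by
  refine ⟨round (t / δ), ?_⟩
  have hround : |(round (t / δ) : ℝ) - t / δ| ≤ 1 / 2 := by
    rw [abs_sub_comm]; exact abs_sub_round _
  calc |δ * round (t / δ) - t| = |δ| * |(round (t / δ) : ℝ) - t / δ| := by
        rw [← abs_mul, mul_sub, mul_div_cancel₀ _ hδ]
    _ ≤ |δ| * (1 / 2) := by gcongr
    _ = |δ| / 2 := by ring

theorem exists_eq_add_mem_dirLambda {β₁ β₂ b₁ b₂ : ℝ} (hβ : β₁ ≠ β₂) (hb₁ : 1 ≤ b₁)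
    (hb₂ : |β₁ - β₂| + 1 ≤ b₂) (p : ℤ × ℤ) :
    ∃ q ∈ dirLambda β₁ b₁, ∃ r ∈ dirLambda β₂ b₂, p = q + r := by
  obtain ⟨m, n⟩ := p
  obtain ⟨m₁, hm₁⟩ := exists_int_abs_mul_sub_le (sub_ne_zero.mpr hβ) (n - β₂ * m)
  have hn₁ : |β₁ * m₁ - round (β₁ * m₁)| ≤ 1 / 2 := abs_sub_round _
  set n₁ := round (β₁ * m₁)
  refine ⟨(m₁, n₁), ?_, (m - m₁, n - n₁), ?_, by simp⟩
  · rw [mem_dirLambda_iff_abs_sub_le, abs_sub_comm]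
    linarith
  · rw [mem_dirLambda_iff_abs_sub_le]
    calc |((n - n₁ : ℤ) : ℝ) - β₂ * (m - m₁ : ℤ)|
        = |(n - β₂ * m - (β₁ - β₂) * m₁) + (β₁ * m₁ - n₁)| := by push_cast; ring_nf
      _ ≤ |(β₁ - β₂) * m₁ - (n - β₂ * m)| + |β₁ * m₁ - n₁| := by
        rw [← abs_neg ((β₁ - β₂) * m₁ - _), neg_sub]; exact abs_add_le _ _
      _ ≤ b₂ / 2 := by linarith

theorem stmt0 (β₁ β₂ : ℝ) (hβ : β₁ ≠ β₂) (b : ℝ)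
    (hb : b > 4 * ((⌊|β₁ - β₂|⌋ : ℝ) + 1)) (p : ℤ × ℤ) :
    ∃ q ∈ dirLambda β₁ b, ∃ r ∈ dirLambda β₂ b, p = q + r := by
  have hfloor : |β₁ - β₂| < ⌊|β₁ - β₂|⌋ + 1 := Int.lt_floor_add_one _
  have hfloor_nonneg : (0 : ℝ) ≤ ⌊|β₁ - β₂|⌋ := by
    exact_mod_cast Int.floor_nonneg.mpr (abs_nonneg _)
  exact exists_eq_add_mem_dirLambda hβ (by linarith) (by linarith [abs_nonneg (β₁ - β₂)]) p
end

section
/- Let (X, 𝓑_X, μ) and (Y, 𝓑_Y, ν) be probability spaces with sub-σ-algebras 𝓧 ⊆ 𝓑_X and 𝓨 ⊆ 𝓑_Y. Then for any f ∈ L²(X, 𝓑_X, μ) and g ∈ L²(Y, 𝓑_Y, ν), the conditional expectation of (x,y) ↦ f(x)g(y) with respect to the product σ-algebra 𝓧 × 𝓨 equals (x,y) ↦ E[f|𝓧](x)·E[g|𝓨](y), μ×ν-almost everywhere. -/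
/-!
Both sides are `m₁.prod m₂`-measurable, so it suffices to compare their integrals over a set
`s ∈ m₁.prod m₂`. By Fubini, `∫_s f(x) g(y) = ∫ f(x) h(x) dμ` with `h(x) = ∫_{s_x} g dν`.
Each slice `s_x` lies in `m₂`, so `g` may be replaced by `ν[g|m₂]` in `h`; this makes `h`
`m₁`-measurable and bounded, and the pull-out property lets `f` be replaced by `μ[f|m₁]`.
Running Fubini backwards gives `∫_s μ[f|m₁](x) ν[g|m₂](y)`.
-/

open MeasureTheory

theorem MeasurableSpace.prod_mono {X Y : Type*} {m₁ m₁' : MeasurableSpace X}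
    {m₂ m₂' : MeasurableSpace Y} (h₁ : m₁ ≤ m₁') (h₂ : m₂ ≤ m₂') :
    m₁.prod m₂ ≤ m₁'.prod m₂' :=
  sup_le_sup (comap_mono h₁) (comap_mono h₂)

namespace MeasureTheory

section Slices

variable {X Y : Type*} [MeasurableSpace X] [MeasurableSpace Y] {μ : Measure X} {ν : Measure Y}
  {s : Set (X × Y)}

theorem setIntegral_prod_mul_eq_integral_mul_setIntegral_preimage {𝕜 : Type*} [RCLike 𝕜]
    [SFinite μ] [SFinite ν] {φ : X → 𝕜} {ψ : Y → 𝕜} (hφ : Integrable φ μ) (hψ : Integrable ψ ν)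
    (hs : MeasurableSet s) :
    ∫ p in s, φ p.1 * ψ p.2 ∂(μ.prod ν) = ∫ x, φ x * ∫ y in Prod.mk x ⁻¹' s, ψ y ∂ν ∂μ := by
  rw [← integral_indicator hs, integral_prod _ ((hφ.mul_prod hψ).indicator hs)]
  congr 1 with x
  rw [← integral_const_mul, ← integral_indicator (measurable_prodMk_left hs)]
  rfl

theorem StronglyMeasurable.setIntegral_prodMk_preimage {E : Type*} [NormedAddCommGroup E]
    [NormedSpace ℝ E] [SFinite ν] {ψ : Y → E} (hψ : StronglyMeasurable ψ)
    (hs : MeasurableSet s) :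
    StronglyMeasurable fun x => ∫ y in Prod.mk x ⁻¹' s, ψ y ∂ν := by
  convert StronglyMeasurable.integral_prod_right' (ν := ν) (f := s.indicator fun p => ψ p.2)
    ((hψ.comp_measurable measurable_snd).indicator hs) using 1
  funext x
  exact (integral_indicator (measurable_prodMk_left hs)).symm

end Slices

theorem integral_condExp_mul_of_stronglyMeasurable {Ω : Type*} {m mΩ : MeasurableSpace Ω}
    {μ : Measure Ω} (hm : m ≤ mΩ) [SigmaFinite (μ.trim hm)] {f h : Ω → ℝ}
    (hh : StronglyMeasurable[m] h) (hfh : Integrable (f * h) μ) (hf : Integrable f μ) :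
    ∫ ω, (μ[f|m]) ω * h ω ∂μ = ∫ ω, f ω * h ω ∂μ :=
  (integral_congr_ae (condExp_mul_of_stronglyMeasurable_right hh hfh hf)).symm.trans
    (integral_condExp hm)

theorem setIntegral_condExp_mul_condExp_prod {X Y : Type*} {m₁ mX : MeasurableSpace X}
    {m₂ mY : MeasurableSpace Y} {μ : Measure X} {ν : Measure Y} (hm₁ : m₁ ≤ mX)
    (hm₂ : m₂ ≤ mY) [SigmaFinite (μ.trim hm₁)] [SigmaFinite (ν.trim hm₂)] {f : X → ℝ}
    {g : Y → ℝ} (hf : Integrable f μ) (hg : Integrable g ν) {s : Set (X × Y)}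
    (hs : MeasurableSet[m₁.prod m₂] s) :
    ∫ p in s, (μ[f|m₁]) p.1 * (ν[g|m₂]) p.2 ∂(μ.prod ν) = ∫ p in s, f p.1 * g p.2 ∂(μ.prod ν) := by
  have := SigmaFinite.of_trim (μ := μ) hm₁
  have := SigmaFinite.of_trim (μ := ν) hm₂
  have hs' : MeasurableSet s := MeasurableSpace.prod_mono hm₁ hm₂ s hs
  have hslice : ∀ x, MeasurableSet[m₂] (Prod.mk x ⁻¹' s) := fun x =>
    @measurable_prodMk_left X Y m₁ m₂ x s hs
  set h : X → ℝ := fun x => ∫ y in Prod.mk x ⁻¹' s, (ν[g|m₂]) y ∂ν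
  have h_eq : ∀ x, ∫ y in Prod.mk x ⁻¹' s, g y ∂ν = h x := fun x =>
    (setIntegral_condExp hm₂ hg (hslice x)).symm
  have hh : StronglyMeasurable[m₁] h := by
    convert @StronglyMeasurable.setIntegral_prodMk_preimage X Y m₁ m₂ (ν.trim hm₂) s ℝ _ _ _
      _ stronglyMeasurable_condExp hs using 1
    funext x
    exact setIntegral_trim hm₂ stronglyMeasurable_condExp (hslice x)
  have h_bound : ∀ x, ‖h x‖ ≤ ∫ y, ‖(ν[g|m₂]) y‖ ∂ν := fun x =>
    (norm_integral_le_integral_norm _).trans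
      (setIntegral_le_integral integrable_condExp.norm (ae_of_all _ fun _ => norm_nonneg _))
  have hfh : Integrable (f * h) μ :=
    hf.mul_bdd (hh.mono hm₁).aestronglyMeasurable (ae_of_all _ h_bound)
  rw [setIntegral_prod_mul_eq_integral_mul_setIntegral_preimage integrable_condExp
      integrable_condExp hs', setIntegral_prod_mul_eq_integral_mul_setIntegral_preimage hf hg hs']
  simp only [h_eq]
  exact integral_condExp_mul_of_stronglyMeasurable hm₁ hh hfh hf

end MeasureTheory

theorem stmt6 {X Y : Type*} (m₁ : MeasurableSpace X) (m₂ : MeasurableSpace Y)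
    [mX : MeasurableSpace X] [mY : MeasurableSpace Y]
    (μ : Measure X) (ν : Measure Y) [IsProbabilityMeasure μ] [IsProbabilityMeasure ν]
    (hm₁ : m₁ ≤ mX) (hm₂ : m₂ ≤ mY)
    (f : X → ℝ) (g : Y → ℝ) (hf : MemLp f 2 μ) (hg : MemLp g 2 ν) :
    (μ.prod ν)[(fun p : X × Y => f p.1 * g p.2) | m₁.prod m₂] =ᵐ[μ.prod ν]
      fun p : X × Y => (μ[f|m₁]) p.1 * (ν[g|m₂]) p.2 := by
  have hfi : Integrable f μ := hf.integrable one_le_two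
  have hgi : Integrable g ν := hg.integrable one_le_two
  have h_meas : StronglyMeasurable[m₁.prod m₂] fun p : X × Y => (μ[f|m₁]) p.1 * (ν[g|m₂]) p.2 :=
    (stronglyMeasurable_condExp.comp_measurable (@measurable_fst X Y m₁ m₂)).mul
      (stronglyMeasurable_condExp.comp_measurable (@measurable_snd X Y m₁ m₂))
  refine (ae_eq_condExp_of_forall_setIntegral_eq (MeasurableSpace.prod_mono hm₁ hm₂)
    (hfi.mul_prod hgi) (fun _ _ _ => (integrable_condExp.mul_prod integrable_condExp).integrableOn)
    (fun s hs _ => ?_) h_meas.aestronglyMeasurable).symm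
  exact setIntegral_condExp_mul_condExp_prod hm₁ hm₂ hfi hgi hs
end

section
/- Let (X, 𝓑, μ, T) be a measure-preserving ℤ²-system, v = (1,β) a direction, b > 0. If there exists a set B ∈ 𝓑 with 0 < μ(B) < 1 such that the closure of {1_B ∘ T^{(m,n)} : (m,n) ∈ Λ^v(b)} is compact in L²(μ), then there exist a set C ∈ 𝓑 and ε > 0 such that limsup_{k→∞} (1/#Λ_k^v(b)) Σ_{(m,n)∈Λ_k^v(b)} |μ(T^{-(m,n)}B ∩ C) − μ(B)μ(C)| ≥ ε. -/
open MeasureTheory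

/-- `Λ_k^{(1,β)}(b) = Λ^{(1,β)}(b) ∩ ([0,k−1] × ℤ)`. -/
def dirLambdaK (β b : ℝ) (k : ℕ) : Set (ℤ × ℤ) :=
  dirLambda β b ∩ {p : ℤ × ℤ | 0 ≤ p.1 ∧ p.1 ≤ (k : ℤ) - 1}

/-- The directional orbit `{1_B ∘ T^w : w ∈ Λ}` of the indicator of `B`, as a subset of `L²(μ)`. -/
def dirOrbit {X : Type*} [mX : MeasurableSpace X] (μ : Measure X) [IsFiniteMeasure μ]
    (T : ℤ × ℤ → X → X) (hT : ∀ w, MeasurePreserving (T w) μ μ) (Λ : Set (ℤ × ℤ))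
    {B : Set X} (hB : MeasurableSet B) : Set (Lp ℝ 2 μ) :=
  {g : Lp ℝ 2 μ | ∃ w ∈ Λ, g = MemLp.toLp _
    (memLp_indicator_const 2 (hB.preimage (hT w).measurable) (1 : ℝ)
      (Or.inr (measure_ne_top μ _)))}
/-! Compactness makes the strip orbit of `1_B` totally bounded, so for `δ = μ(B)(1 - μ(B))/2`
finitely many translates `1_{T^{-v}B}`, `v ∈ V`, are `√δ`-dense in it. Since
`‖1_A - 1_C‖² = μ(A ∆ C)`, a point `w` of the strip that is `√δ`-close to `v` has
`μ(T^{-w}B ∩ T^{-v}B) - μ(B)² ≥ μ(B) - δ - μ(B)² = δ`. For each `k` some `v ∈ V` is close to at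
least a `1/#V` fraction of `Λ_k`, and as `V` is finite one `v` does so for infinitely many `k`:
`C = T^{-v}B` and `ε = δ/#V` work. -/

open Filter Finset
open scoped symmDiff

theorem dirLambdaK_finite (β b : ℝ) (k : ℕ) : (dirLambdaK β b k).Finite := by
  refine ((Set.finite_Icc (0 : ℤ) (k - 1)).biUnion fun m _ =>
    (Set.finite_Icc ⌈β * m - b / 2⌉ ⌊β * m + b / 2⌋).image (m, ·)).subset ?_
  rintro ⟨m, n⟩ ⟨⟨hlo, hhi⟩, hm₀, hmk⟩
  exact Set.mem_biUnion ⟨hm₀, hmk⟩ ⟨n, ⟨Int.ceil_le.2 hlo, Int.le_floor.2 hhi⟩, rfl⟩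

theorem zero_mem_dirLambdaK {β b : ℝ} (hb : 0 ≤ b) {k : ℕ} (hk : 0 < k) :
    (0 : ℤ × ℤ) ∈ dirLambdaK β b k :=
  ⟨⟨by simp; linarith, by simp; linarith⟩, le_rfl, by simp; omega⟩

theorem dirOrbit_eq_image {X : Type*} [MeasurableSpace X] (μ : Measure X) [IsFiniteMeasure μ]
    (T : ℤ × ℤ → X → X) (hT : ∀ w, MeasurePreserving (T w) μ μ) (Λ : Set (ℤ × ℤ))
    {B : Set X} (hB : MeasurableSet B) :
    dirOrbit μ T hT Λ hB = (fun w ↦ indicatorConstLp 2 (hB.preimage (hT w).measurable)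
      (measure_ne_top μ _) (1 : ℝ)) '' Λ := by
  ext g
  simp [dirOrbit, indicatorConstLp, eq_comm]

theorem TotallyBounded.exists_finset_dist_lt {ι E : Type*} [PseudoMetricSpace E] {F : ι → E}
    {s : Set ι} (h : TotallyBounded (F '' s)) {δ : ℝ} (hδ : 0 < δ) :
    ∃ V : Finset ι, ∀ w ∈ s, ∃ v ∈ V, dist (F w) (F v) < δ := by
  obtain ⟨t, hts, htfin, hcover⟩ := Metric.finite_approx_of_totallyBounded h δ hδ
  obtain ⟨V, -, hVfin, hcover⟩ := (Set.exists_subset_image_finite_and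
    (p := fun t ↦ F '' s ⊆ ⋃ y ∈ t, Metric.ball y δ)).mp ⟨t, hts, htfin, hcover⟩
  refine ⟨hVfin.toFinset, fun w hw ↦ ?_⟩
  obtain ⟨_, ⟨v, hv, rfl⟩, hwv⟩ := Set.mem_iUnion₂.mp (hcover (Set.mem_image_of_mem F hw))
  exact ⟨v, hVfin.mem_toFinset.2 hv, hwv⟩

section Indicator

variable {X : Type*} [MeasurableSpace X] {μ : Measure X} {A C : Set X}

theorem dist_indicatorConstLp_one_sq (hA : MeasurableSet A) (hC : MeasurableSet C)
    (hμA : μ A ≠ ⊤) (hμC : μ C ≠ ⊤) :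
    dist (indicatorConstLp 2 hA hμA (1 : ℝ)) (indicatorConstLp 2 hC hμC 1) ^ 2 = μ.real (A ∆ C) := by
  rw [dist_indicatorConstLp_eq_norm, norm_indicatorConstLp two_ne_zero ENNReal.ofNat_ne_top,
    norm_one, one_mul, ← Real.rpow_natCast, ← Real.rpow_mul measureReal_nonneg]
  norm_num

theorem measureReal_sub_dist_sq_le_measureReal_inter (hA : MeasurableSet A) (hC : MeasurableSet C)
    (hμA : μ A ≠ ⊤) (hμC : μ C ≠ ⊤) :
    μ.real A - dist (indicatorConstLp 2 hA hμA (1 : ℝ)) (indicatorConstLp 2 hC hμC 1) ^ 2 ≤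
      μ.real (A ∩ C) := by
  rw [dist_indicatorConstLp_one_sq, ← measureReal_inter_add_sdiff hC hμA]
  have : μ.real (A \ C) ≤ μ.real (A ∆ C) :=
    measureReal_mono Set.subset_union_left (measure_symmDiff_ne_top hμA hμC)
  linarith

end Indicator

theorem abs_measureReal_sub_mul_measureReal_le_one {X : Type*} [MeasurableSpace X]
    {μ : Measure X} [IsProbabilityMeasure μ] {s t u : Set X} :
    |μ.real s - μ.real t * μ.real u| ≤ 1 := by
  simpa using abs_sub_le_of_le_of_le measureReal_nonneg measureReal_le_one
    (mul_nonneg measureReal_nonneg measureReal_nonneg) (mul_le_one₀ measureReal_le_one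
      measureReal_nonneg measureReal_le_one)

theorem Finset.exists_le_sum_div_card {α β : Type*} {s : Finset α} (hs : s.Nonempty)
    {V : Finset β} {g : β → α → ℝ} (hg : ∀ y ∈ V, ∀ a ∈ s, 0 ≤ g y a) {δ : ℝ}
    (hcov : ∀ a ∈ s, ∃ y ∈ V, δ ≤ g y a) :
    ∃ y ∈ V, δ / #V ≤ (∑ a ∈ s, g y a) / #s := by
  obtain ⟨a₀, ha₀⟩ := hs
  have hV : V.Nonempty := let ⟨y, hy, _⟩ := hcov a₀ ha₀; ⟨y, hy⟩
  have hsum : ∑ _y ∈ V, δ * #s / #V ≤ ∑ y ∈ V, ∑ a ∈ s, g y a := by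
    calc ∑ _y ∈ V, δ * #s / #V = ∑ _a ∈ s, δ := by
          rw [sum_const, sum_const, nsmul_eq_mul, nsmul_eq_mul]
          field_simp
      _ ≤ ∑ a ∈ s, ∑ y ∈ V, g y a := sum_le_sum fun a ha ↦
          let ⟨y, hy, hya⟩ := hcov a ha
          hya.trans (single_le_sum (fun y hy ↦ hg y hy a ha) hy)
      _ = ∑ y ∈ V, ∑ a ∈ s, g y a := sum_comm
  obtain ⟨y, hy, hle⟩ := exists_le_of_sum_le hV hsum
  refine ⟨y, hy, ?_⟩
  rwa [le_div_iff₀ (by exact_mod_cast card_pos.2 ⟨a₀, ha₀⟩), div_mul_eq_mul_div]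

theorem exists_le_limsup_finsum_div_ncard {α β : Type*} {S : ℕ → Set α}
    (hS : ∀ k, (S k).Finite) (hne : ∀ᶠ k in atTop, (S k).Nonempty) {V : Finset β}
    {g : β → α → ℝ} {M δ : ℝ} (hg0 : ∀ y ∈ V, ∀ a, 0 ≤ g y a) (hgM : ∀ y ∈ V, ∀ a, g y a ≤ M)
    (hcov : ∀ k, ∀ a ∈ S k, ∃ y ∈ V, δ ≤ g y a) :
    ∃ y ∈ V, δ / #V ≤ limsup (fun k ↦ (∑ᶠ a ∈ S k, g y a) / (S k).ncard) atTop := by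
  have havg : ∀ y k, (∑ᶠ a ∈ S k, g y a) / (S k).ncard =
      (∑ a ∈ (hS k).toFinset, g y a) / #(hS k).toFinset := fun y k ↦ by
    rw [finsum_mem_eq_finite_toFinset_sum _ (hS k), Set.ncard_eq_toFinset_card _ (hS k)]
  simp_rw [havg]
  have hev : ∀ᶠ k in atTop, ∃ y ∈ V, δ / #V ≤ (∑ a ∈ (hS k).toFinset, g y a) / #(hS k).toFinset :=
    hne.mono fun k hk ↦ exists_le_sum_div_card ((hS k).toFinset_nonempty.2 hk)
      (fun y hy a _ ↦ hg0 y hy a) (fun a ha ↦ hcov k a ((hS k).mem_toFinset.1 ha))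
  obtain ⟨y, hy, hfreq⟩ := V.frequently_exists.mp hev.frequently
  refine ⟨y, hy, le_limsup_of_frequently_le hfreq (isBoundedUnder_of_eventually_le (a := M) ?_)⟩
  filter_upwards [hne] with k hk
  rw [div_le_iff₀ (by exact_mod_cast card_pos.2 ((hS k).toFinset_nonempty.2 hk)), mul_comm]
  simpa using sum_le_card_nsmul _ _ M fun a _ ↦ hgM y hy a

theorem stmt9_general {X : Type*} [mX : MeasurableSpace X] (μ : Measure X) [IsProbabilityMeasure μ]
    (T : ℤ × ℤ → X → X) (hT : ∀ w, MeasurePreserving (T w) μ μ)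
    (β b : ℝ) (hb : 0 < b)
    (B : Set X) (hB : MeasurableSet B) (hB0 : 0 < μ B) (hB1 : μ B < 1)
    (hcpt : IsCompact (closure (dirOrbit μ T hT (dirLambda β b) hB))) :
    ∃ C : Set X, MeasurableSet C ∧ ∃ ε > (0 : ℝ),
      ε ≤ Filter.limsup
        (fun k : ℕ =>
          (∑ᶠ w ∈ dirLambdaK β b k,
            |(μ (T w ⁻¹' B ∩ C)).toReal - (μ B).toReal * (μ C).toReal|) /
          ((dirLambdaK β b k).ncard : ℝ))
        Filter.atTop := by
  set a := μ.real B
  have ha0 : 0 < a := ENNReal.toReal_pos hB0.ne' (measure_ne_top μ B)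
  have ha1 : a < 1 := ENNReal.toReal_lt_of_lt_ofReal (by simpa using hB1)
  have hmeas (w : ℤ × ℤ) : MeasurableSet (T w ⁻¹' B) := hB.preimage (hT w).measurable
  have hμ (w : ℤ × ℤ) : μ.real (T w ⁻¹' B) = a := (hT w).measureReal_preimage hB.nullMeasurableSet
  set δ := a * (1 - a) / 2 with hδ_def
  have hδ : 0 < δ := half_pos (mul_pos ha0 (sub_pos.2 ha1))
  have hbdd := hcpt.totallyBounded.subset subset_closure
  rw [dirOrbit_eq_image] at hbdd
  obtain ⟨V, hV⟩ := hbdd.exists_finset_dist_lt (Real.sqrt_pos.2 hδ)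
  have hcov (k : ℕ) (w) (hw : w ∈ dirLambdaK β b k) :
      ∃ v ∈ V, δ ≤ |μ.real (T w ⁻¹' B ∩ T v ⁻¹' B) - a * μ.real (T v ⁻¹' B)| := by
    obtain ⟨v, hvV, hwv⟩ := hV w hw.1
    have hinter := measureReal_sub_dist_sq_le_measureReal_inter (hmeas w) (hmeas v)
      (measure_ne_top μ _) (measure_ne_top μ _)
    have hsq := pow_lt_pow_left₀ hwv dist_nonneg two_ne_zero
    rw [Real.sq_sqrt hδ.le] at hsq
    rw [hμ] at hinter
    refine ⟨v, hvV, le_abs.2 (Or.inl ?_)⟩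
    rw [hμ v]
    linarith
  obtain ⟨v, hvV, hv⟩ := exists_le_limsup_finsum_div_ncard (dirLambdaK_finite β b)
    ((eventually_gt_atTop 0).mono fun k hk ↦ ⟨0, zero_mem_dirLambdaK hb.le hk⟩)
    (fun _ _ _ ↦ abs_nonneg _) (fun _ _ _ ↦ abs_measureReal_sub_mul_measureReal_le_one) hcov
  exact ⟨T v ⁻¹' B, hmeas v, δ / #V, div_pos hδ (by exact_mod_cast card_pos.2 ⟨v, hvV⟩), hv⟩

theorem stmt9 {X : Type*} [mX : MeasurableSpace X] (μ : Measure X) [IsProbabilityMeasure μ]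
    (T : ℤ × ℤ → X → X) (hT : ∀ w, MeasurePreserving (T w) μ μ)
    (hTadd : ∀ v w : ℤ × ℤ, T (v + w) = T v ∘ T w)
    (β b : ℝ) (hb : 0 < b)
    (B : Set X) (hB : MeasurableSet B) (hB0 : 0 < μ B) (hB1 : μ B < 1)
    (hcpt : IsCompact (closure (dirOrbit μ T hT (dirLambda β b) hB))) :
    ∃ C : Set X, MeasurableSet C ∧ ∃ ε > (0 : ℝ),
      ε ≤ Filter.limsup
        (fun k : ℕ =>
          (∑ᶠ w ∈ dirLambdaK β b k,
            |(μ (T w ⁻¹' B ∩ C)).toReal - (μ B).toReal * (μ C).toReal|) /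
          ((dirLambdaK β b k).ncard : ℝ))
        Filter.atTop :=
  stmt9_general (mX := mX) μ T hT β b hb B hB hB0 hB1 hcpt
end
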